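/- The six vectors λ₁′, λ₂′, λ₃′, λ₄′, λ₅′, λ₈′ are ℤ-linearly independent in ℂ⁶, and the ℤ-submodule of ℂ⁶ they generate is a direct summand of the ℤ-submodule generated by {μ₁, μ₂, μ₃, μ₄, μ₅, μ₆, μ₇, μ₈, μ₉, μ₁₀}; indeed the ten vectors μ₁ (= λ₁′), μ₂, μ₃, λ₂′, λ₃′, μ₇ (= λ₄′), μ₈ (= λ₅′), λ₈′, μ₉, μ₁₀ generate the same ℤ-submodule of ℂ⁶ as {μ₁, …, μ₁₀} and are ℤ-linearly independent. -/
import Mathlib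


open Complex

/-- The sixth root of unity `ω = e^{πi/3} = (1 + i√3)/2`. -/
noncomputable def ω : ℂ := (1 + Real.sqrt 3 * I) / 2

/-- The basis vectors `μ₁, …, μ₁₀` of the range of the Chern–Connes character `𝐓₆`. -/
noncomputable def μ (θ : ℝ) : Fin 10 → Fin 6 → ℂ :=
  ![![1, 0, 0, 0, 0, 0],
    ![1/6, 1/6, 1/6, 1/6, 1/6, 1/6],
    ![1/6, (1 - ω)/6, -ω/6, -ω/6, -(1/6), -(1/6)],
    ![1/6, -ω/6, (ω - 1)/6, (ω - 1)/6, 1/6, 1/6],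
    ![1/6, -(1/6), 1/6, 1/6, -(1/6), -(1/6)],
    ![1/6, (ω - 1)/6, -ω/6, -ω/6, 1/6, 1/6],
    ![1/3, 0, 0, 1/3, 0, 0],
    ![1/3, 0, 0, -ω/3, 0, 0],
    ![1/2, 0, 0, 0, 0, 1/2],
    ![(θ : ℂ)/6, ω/6, (1 + ω)/18, (1 + ω)/6, 1/12, 1/3]]
/-- The images `λ₁′, …, λ₈′` of the generators of `K₀(A_θ ⋊ ℤ₃)` under `𝐓₆ ∘ κ⋆`. -/
noncomputable def lam' (θ : ℝ) : Fin 8 → Fin 6 → ℂ :=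
  ![![1, 0, 0, 0, 0, 0],
    ![1/3, 0, 1/3, 1/3, 0, 0],
    ![1/3, 0, -ω/3, -ω/3, 0, 0],
    ![1/3, 0, 0, 1/3, 0, 0],
    ![1/3, 0, 0, -ω/3, 0, 0],
    ![1/3, 0, 0, 1/3, 0, 0],
    ![1/3, 0, 0, -ω/3, 0, 0],
    ![(θ : ℂ)/3, 0, (1 + ω)/9, (1 + ω)/3, 0, 0]]

section Aux

variable {α : Type*}

@[simp] lemma vec4_0 (x0 x1 x2 x3 : α) : ![x0,x1,x2,x3] 0 = x0 := rfl
@[simp] lemma vec4_1 (x0 x1 x2 x3 : α) : ![x0,x1,x2,x3] 1 = x1 := rfl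
@[simp] lemma vec4_2 (x0 x1 x2 x3 : α) : ![x0,x1,x2,x3] 2 = x2 := rfl
@[simp] lemma vec4_3 (x0 x1 x2 x3 : α) : ![x0,x1,x2,x3] 3 = x3 := rfl

@[simp] lemma vec6_0 (x0 x1 x2 x3 x4 x5 : α) : ![x0,x1,x2,x3,x4,x5] 0 = x0 := rfl
@[simp] lemma vec6_1 (x0 x1 x2 x3 x4 x5 : α) : ![x0,x1,x2,x3,x4,x5] 1 = x1 := rfl
@[simp] lemma vec6_2 (x0 x1 x2 x3 x4 x5 : α) : ![x0,x1,x2,x3,x4,x5] 2 = x2 := rfl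
@[simp] lemma vec6_3 (x0 x1 x2 x3 x4 x5 : α) : ![x0,x1,x2,x3,x4,x5] 3 = x3 := rfl
@[simp] lemma vec6_4 (x0 x1 x2 x3 x4 x5 : α) : ![x0,x1,x2,x3,x4,x5] 4 = x4 := rfl
@[simp] lemma vec6_5 (x0 x1 x2 x3 x4 x5 : α) : ![x0,x1,x2,x3,x4,x5] 5 = x5 := rfl

@[simp] lemma vec8_0 (x0 x1 x2 x3 x4 x5 x6 x7 : α) :
    ![x0,x1,x2,x3,x4,x5,x6,x7] 0 = x0 := rfl
@[simp] lemma vec8_1 (x0 x1 x2 x3 x4 x5 x6 x7 : α) :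
    ![x0,x1,x2,x3,x4,x5,x6,x7] 1 = x1 := rfl
@[simp] lemma vec8_2 (x0 x1 x2 x3 x4 x5 x6 x7 : α) :
    ![x0,x1,x2,x3,x4,x5,x6,x7] 2 = x2 := rfl
@[simp] lemma vec8_3 (x0 x1 x2 x3 x4 x5 x6 x7 : α) :
    ![x0,x1,x2,x3,x4,x5,x6,x7] 3 = x3 := rfl
@[simp] lemma vec8_4 (x0 x1 x2 x3 x4 x5 x6 x7 : α) :
    ![x0,x1,x2,x3,x4,x5,x6,x7] 4 = x4 := rfl
@[simp] lemma vec8_5 (x0 x1 x2 x3 x4 x5 x6 x7 : α) :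
    ![x0,x1,x2,x3,x4,x5,x6,x7] 5 = x5 := rfl
@[simp] lemma vec8_6 (x0 x1 x2 x3 x4 x5 x6 x7 : α) :
    ![x0,x1,x2,x3,x4,x5,x6,x7] 6 = x6 := rfl
@[simp] lemma vec8_7 (x0 x1 x2 x3 x4 x5 x6 x7 : α) :
    ![x0,x1,x2,x3,x4,x5,x6,x7] 7 = x7 := rfl

@[simp] lemma vec10_0 (x0 x1 x2 x3 x4 x5 x6 x7 x8 x9 : α) :
    ![x0,x1,x2,x3,x4,x5,x6,x7,x8,x9] 0 = x0 := rfl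
@[simp] lemma vec10_1 (x0 x1 x2 x3 x4 x5 x6 x7 x8 x9 : α) :
    ![x0,x1,x2,x3,x4,x5,x6,x7,x8,x9] 1 = x1 := rfl
@[simp] lemma vec10_2 (x0 x1 x2 x3 x4 x5 x6 x7 x8 x9 : α) :
    ![x0,x1,x2,x3,x4,x5,x6,x7,x8,x9] 2 = x2 := rfl
@[simp] lemma vec10_3 (x0 x1 x2 x3 x4 x5 x6 x7 x8 x9 : α) :
    ![x0,x1,x2,x3,x4,x5,x6,x7,x8,x9] 3 = x3 := rfl
@[simp] lemma vec10_4 (x0 x1 x2 x3 x4 x5 x6 x7 x8 x9 : α) :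
    ![x0,x1,x2,x3,x4,x5,x6,x7,x8,x9] 4 = x4 := rfl
@[simp] lemma vec10_5 (x0 x1 x2 x3 x4 x5 x6 x7 x8 x9 : α) :
    ![x0,x1,x2,x3,x4,x5,x6,x7,x8,x9] 5 = x5 := rfl
@[simp] lemma vec10_6 (x0 x1 x2 x3 x4 x5 x6 x7 x8 x9 : α) :
    ![x0,x1,x2,x3,x4,x5,x6,x7,x8,x9] 6 = x6 := rfl
@[simp] lemma vec10_7 (x0 x1 x2 x3 x4 x5 x6 x7 x8 x9 : α) :
    ![x0,x1,x2,x3,x4,x5,x6,x7,x8,x9] 7 = x7 := rfl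
@[simp] lemma vec10_8 (x0 x1 x2 x3 x4 x5 x6 x7 x8 x9 : α) :
    ![x0,x1,x2,x3,x4,x5,x6,x7,x8,x9] 8 = x8 := rfl
@[simp] lemma vec10_9 (x0 x1 x2 x3 x4 x5 x6 x7 x8 x9 : α) :
    ![x0,x1,x2,x3,x4,x5,x6,x7,x8,x9] 9 = x9 := rfl

lemma muapp_0 (θ : ℝ) : μ θ 0 = (![1, 0, 0, 0, 0, 0] : Fin 6 → ℂ) := rfl
lemma muapp_1 (θ : ℝ) : μ θ 1 = (![1/6, 1/6, 1/6, 1/6, 1/6, 1/6] : Fin 6 → ℂ) := rfl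
lemma muapp_2 (θ : ℝ) : μ θ 2 = (![1/6, (1 - ω)/6, -ω/6, -ω/6, -(1/6), -(1/6)] : Fin 6 → ℂ) := rfl
lemma muapp_3 (θ : ℝ) : μ θ 3 = (![1/6, -ω/6, (ω - 1)/6, (ω - 1)/6, 1/6, 1/6] : Fin 6 → ℂ) := rfl
lemma muapp_4 (θ : ℝ) : μ θ 4 = (![1/6, -(1/6), 1/6, 1/6, -(1/6), -(1/6)] : Fin 6 → ℂ) := rfl
lemma muapp_5 (θ : ℝ) : μ θ 5 = (![1/6, (ω - 1)/6, -ω/6, -ω/6, 1/6, 1/6] : Fin 6 → ℂ) := rfl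
lemma muapp_6 (θ : ℝ) : μ θ 6 = (![1/3, 0, 0, 1/3, 0, 0] : Fin 6 → ℂ) := rfl
lemma muapp_7 (θ : ℝ) : μ θ 7 = (![1/3, 0, 0, -ω/3, 0, 0] : Fin 6 → ℂ) := rfl
lemma muapp_8 (θ : ℝ) : μ θ 8 = (![1/2, 0, 0, 0, 0, 1/2] : Fin 6 → ℂ) := rfl
lemma muapp_9 (θ : ℝ) : μ θ 9 = (![(θ : ℂ)/6, ω/6, (1 + ω)/18, (1 + ω)/6, 1/12, 1/3] : Fin 6 → ℂ) := rfl
lemma lamapp_0 (θ : ℝ) : lam' θ 0 = (![1, 0, 0, 0, 0, 0] : Fin 6 → ℂ) := rfl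
lemma lamapp_1 (θ : ℝ) : lam' θ 1 = (![1/3, 0, 1/3, 1/3, 0, 0] : Fin 6 → ℂ) := rfl
lemma lamapp_2 (θ : ℝ) : lam' θ 2 = (![1/3, 0, -ω/3, -ω/3, 0, 0] : Fin 6 → ℂ) := rfl
lemma lamapp_7 (θ : ℝ) : lam' θ 7 = (![(θ : ℂ)/3, 0, (1 + ω)/9, (1 + ω)/3, 0, 0] : Fin 6 → ℂ) := rfl

lemma key (θ : ℝ) (hθ : Irrational θ) (a b c : ℤ)
    (h : (a : ℂ) + (b : ℂ) * ω + (c : ℂ) * (θ : ℂ) = 0) : a = 0 ∧ b = 0 ∧ c = 0 := by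
  have him := congrArg Complex.im h
  have hre := congrArg Complex.re h
  simp [ω, Complex.add_im, Complex.mul_im, Complex.add_re, Complex.mul_re, Complex.div_im,
    Complex.div_re, Complex.ofReal_im, Complex.ofReal_re] at him hre
  subst him
  simp at hre
  have hc : c = 0 := by
    by_contra hc
    apply hθ
    refine ⟨(-a : ℚ) / (c : ℚ), ?_⟩
    have hcr : (c : ℝ) ≠ 0 := by exact_mod_cast hc
    push_cast
    field_simp
    linarith
  subst hc
  simp at hre
  exact ⟨by exact_mod_cast hre, rfl, rfl⟩

lemma sum10 {M : Type*} [AddCommMonoid M] (f : Fin 10 → M) :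
    ∑ i, f i = f 0 + f 1 + f 2 + f 3 + f 4 + f 5 + f 6 + f 7 + f 8 + f 9 := by
  simp [Fin.sum_univ_succ, add_assoc]

lemma ind10 (θ : ℝ) (hθ : Irrational θ) :
    LinearIndependent ℤ
      ![μ θ 0, μ θ 1, μ θ 2, lam' θ 1, lam' θ 2, μ θ 6, μ θ 7, lam' θ 7, μ θ 8, μ θ 9] := by
  rw [Fintype.linearIndependent_iff]
  intro g h
  rw [sum10] at h
  have h0 : g 0 • (1:ℂ) + g 1 • ((1:ℂ)/6) + g 2 • ((1:ℂ)/6) + g 3 • ((1:ℂ)/3)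
      + g 4 • ((1:ℂ)/3) + g 5 • ((1:ℂ)/3) + g 6 • ((1:ℂ)/3) + g 7 • ((θ:ℂ)/3)
      + g 8 • ((1:ℂ)/2) + g 9 • ((θ:ℂ)/6) = 0 := congrFun h 0
  have h1 : g 0 • (0:ℂ) + g 1 • ((1:ℂ)/6) + g 2 • ((1 - ω)/6) + g 3 • (0:ℂ)
      + g 4 • (0:ℂ) + g 5 • (0:ℂ) + g 6 • (0:ℂ) + g 7 • (0:ℂ)
      + g 8 • (0:ℂ) + g 9 • (ω/6) = 0 := congrFun h 1
  have h2 : g 0 • (0:ℂ) + g 1 • ((1:ℂ)/6) + g 2 • (-ω/6) + g 3 • ((1:ℂ)/3)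
      + g 4 • (-ω/3) + g 5 • (0:ℂ) + g 6 • (0:ℂ) + g 7 • ((1 + ω)/9)
      + g 8 • (0:ℂ) + g 9 • ((1 + ω)/18) = 0 := congrFun h 2
  have h3 : g 0 • (0:ℂ) + g 1 • ((1:ℂ)/6) + g 2 • (-ω/6) + g 3 • ((1:ℂ)/3)
      + g 4 • (-ω/3) + g 5 • ((1:ℂ)/3) + g 6 • (-ω/3) + g 7 • ((1 + ω)/3)
      + g 8 • (0:ℂ) + g 9 • ((1 + ω)/6) = 0 := congrFun h 3
  have h4 : g 0 • (0:ℂ) + g 1 • ((1:ℂ)/6) + g 2 • (-((1:ℂ)/6)) + g 3 • (0:ℂ)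
      + g 4 • (0:ℂ) + g 5 • (0:ℂ) + g 6 • (0:ℂ) + g 7 • (0:ℂ)
      + g 8 • (0:ℂ) + g 9 • ((1:ℂ)/12) = 0 := congrFun h 4
  have h5 : g 0 • (0:ℂ) + g 1 • ((1:ℂ)/6) + g 2 • (-((1:ℂ)/6)) + g 3 • (0:ℂ)
      + g 4 • (0:ℂ) + g 5 • (0:ℂ) + g 6 • (0:ℂ) + g 7 • (0:ℂ)
      + g 8 • ((1:ℂ)/2) + g 9 • ((1:ℂ)/3) = 0 := congrFun h 5
  simp only [zsmul_eq_mul] at h0 h1 h2 h3 h4 h5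
  obtain ⟨e0a, -, e0c⟩ := key θ hθ
    (6*g 0 + g 1 + g 2 + 2*g 3 + 2*g 4 + 2*g 5 + 2*g 6 + 3*g 8) 0 (2*g 7 + g 9)
    (by push_cast; linear_combination (6:ℂ) * h0)
  obtain ⟨e1a, e1b, -⟩ := key θ hθ (g 1 + g 2) (g 9 - g 2) 0
    (by push_cast; linear_combination (6:ℂ) * h1)
  obtain ⟨e2a, e2b, -⟩ := key θ hθ (3*g 1 + 6*g 3 + 2*g 7 + g 9)
    (-(3*g 2) - 6*g 4 + 2*g 7 + g 9) 0
    (by push_cast; linear_combination (18:ℂ) * h2)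
  obtain ⟨e3a, e3b, -⟩ := key θ hθ (g 1 + 2*g 3 + 2*g 5 + 2*g 7 + g 9)
    (-(g 2) - 2*g 4 - 2*g 6 + 2*g 7 + g 9) 0
    (by push_cast; linear_combination (6:ℂ) * h3)
  obtain ⟨e4a, -, -⟩ := key θ hθ (2*g 1 - 2*g 2 + g 9) 0 0
    (by push_cast; linear_combination (12:ℂ) * h4)
  obtain ⟨e5a, -, -⟩ := key θ hθ (g 1 - g 2 + 3*g 8 + 2*g 9) 0 0
    (by push_cast; linear_combination (6:ℂ) * h5)
  have E0 : g 0 = 0 := by omega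
  have E1 : g 1 = 0 := by omega
  have E2 : g 2 = 0 := by omega
  have E3 : g 3 = 0 := by omega
  have E4 : g 4 = 0 := by omega
  have E5 : g 5 = 0 := by omega
  have E6 : g 6 = 0 := by omega
  have E7 : g 7 = 0 := by omega
  have E8 : g 8 = 0 := by omega
  have E9 : g 9 = 0 := by omega
  intro i
  fin_cases i <;> assumption

lemma eq1 (θ : ℝ) : lam' θ 1 = μ θ 1 + μ θ 4 := by
  funext j; fin_cases j <;> simp [muapp_0, muapp_1, muapp_2, muapp_3, muapp_4, muapp_5, muapp_6, muapp_7, muapp_8, muapp_9, lamapp_0, lamapp_1, lamapp_2, lamapp_7] <;> ring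

lemma eq2 (θ : ℝ) : lam' θ 2 = μ θ 2 + μ θ 5 := by
  funext j; fin_cases j <;> simp [muapp_0, muapp_1, muapp_2, muapp_3, muapp_4, muapp_5, muapp_6, muapp_7, muapp_8, muapp_9, lamapp_0, lamapp_1, lamapp_2, lamapp_7] <;> ring

lemma eq8 (θ : ℝ) : lam' θ 7 = μ θ 2 + μ θ 3 + μ θ 4 - μ θ 8 + μ θ 9 + μ θ 9 := by
  funext j; fin_cases j <;> simp [muapp_0, muapp_1, muapp_2, muapp_3, muapp_4, muapp_5, muapp_6, muapp_7, muapp_8, muapp_9, lamapp_0, lamapp_1, lamapp_2, lamapp_7] <;> ring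


lemma ind6 (θ : ℝ) (hθ : Irrational θ) :
    LinearIndependent ℤ (![lam' θ 0, lam' θ 1, lam' θ 2, lam' θ 3, lam' θ 4, lam' θ 7] : Fin 6 → Fin 6 → ℂ) := by
  have hinj : Function.Injective (![0, 3, 4, 5, 6, 7] : Fin 6 → Fin 10) := by decide
  have hcomp : (![lam' θ 0, lam' θ 1, lam' θ 2, lam' θ 3, lam' θ 4, lam' θ 7] : Fin 6 → Fin 6 → ℂ)
      = (![μ θ 0, μ θ 1, μ θ 2, lam' θ 1, lam' θ 2, μ θ 6, μ θ 7, lam' θ 7, μ θ 8, μ θ 9] : Fin 10 → Fin 6 → ℂ) ∘ ![0, 3, 4, 5, 6, 7] := by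
    funext i; fin_cases i <;> rfl
  rw [hcomp]; exact (ind10 θ hθ).comp _ hinj

lemma hmu_mem (θ : ℝ) : ∀ k : Fin 10, μ θ k ∈ Submodule.span ℤ (Set.range (μ θ)) :=
  fun k => Submodule.subset_span ⟨k, rfl⟩

lemma hnu_mem (θ : ℝ) : ∀ k : Fin 10,
    (![μ θ 0, μ θ 1, μ θ 2, lam' θ 1, lam' θ 2, μ θ 6, μ θ 7, lam' θ 7, μ θ 8, μ θ 9] : Fin 10 → Fin 6 → ℂ) k
      ∈ Submodule.span ℤ (Set.range (![μ θ 0, μ θ 1, μ θ 2, lam' θ 1, lam' θ 2, μ θ 6, μ θ 7, lam' θ 7, μ θ 8, μ θ 9] : Fin 10 → Fin 6 → ℂ)) :=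
  fun k => Submodule.subset_span ⟨k, rfl⟩

lemma span4_le {M : Type*} [AddCommGroup M] [Module ℤ M] (v : Fin 4 → M)
    (S : Submodule ℤ M) (h0 : v 0 ∈ S) (h1 : v 1 ∈ S) (h2 : v 2 ∈ S) (h3 : v 3 ∈ S) :
    Submodule.span ℤ (Set.range v) ≤ S := by
  rw [Submodule.span_le]; rintro x ⟨i, rfl⟩; fin_cases i <;> assumption

lemma span6_le {M : Type*} [AddCommGroup M] [Module ℤ M] (v : Fin 6 → M)
    (S : Submodule ℤ M) (h0 : v 0 ∈ S) (h1 : v 1 ∈ S) (h2 : v 2 ∈ S) (h3 : v 3 ∈ S)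
    (h4 : v 4 ∈ S) (h5 : v 5 ∈ S) :
    Submodule.span ℤ (Set.range v) ≤ S := by
  rw [Submodule.span_le]; rintro x ⟨i, rfl⟩; fin_cases i <;> assumption

lemma span10_le {M : Type*} [AddCommGroup M] [Module ℤ M] (v : Fin 10 → M)
    (S : Submodule ℤ M) (h0 : v 0 ∈ S) (h1 : v 1 ∈ S) (h2 : v 2 ∈ S) (h3 : v 3 ∈ S)
    (h4 : v 4 ∈ S) (h5 : v 5 ∈ S) (h6 : v 6 ∈ S) (h7 : v 7 ∈ S) (h8 : v 8 ∈ S)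
    (h9 : v 9 ∈ S) :
    Submodule.span ℤ (Set.range v) ≤ S := by
  rw [Submodule.span_le]; rintro x ⟨i, rfl⟩; fin_cases i <;> assumption

lemma lam0_eq (θ : ℝ) : lam' θ 0 = μ θ 0 := rfl
lemma lam3_eq (θ : ℝ) : lam' θ 3 = μ θ 6 := rfl
lemma lam4_eq (θ : ℝ) : lam' θ 4 = μ θ 7 := rfl

lemma nmem0 (θ : ℝ) : μ θ 0
    ∈ Submodule.span ℤ (Set.range (![μ θ 0, μ θ 1, μ θ 2, lam' θ 1, lam' θ 2, μ θ 6, μ θ 7, lam' θ 7, μ θ 8, μ θ 9] : Fin 10 → Fin 6 → ℂ)) :=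
  Submodule.subset_span ⟨0, vec10_0 _ _ _ _ _ _ _ _ _ _⟩

lemma nmem1 (θ : ℝ) : μ θ 1
    ∈ Submodule.span ℤ (Set.range (![μ θ 0, μ θ 1, μ θ 2, lam' θ 1, lam' θ 2, μ θ 6, μ θ 7, lam' θ 7, μ θ 8, μ θ 9] : Fin 10 → Fin 6 → ℂ)) :=
  Submodule.subset_span ⟨1, vec10_1 _ _ _ _ _ _ _ _ _ _⟩

lemma nmem2 (θ : ℝ) : μ θ 2
    ∈ Submodule.span ℤ (Set.range (![μ θ 0, μ θ 1, μ θ 2, lam' θ 1, lam' θ 2, μ θ 6, μ θ 7, lam' θ 7, μ θ 8, μ θ 9] : Fin 10 → Fin 6 → ℂ)) :=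
  Submodule.subset_span ⟨2, vec10_2 _ _ _ _ _ _ _ _ _ _⟩

lemma nmem3 (θ : ℝ) : lam' θ 1
    ∈ Submodule.span ℤ (Set.range (![μ θ 0, μ θ 1, μ θ 2, lam' θ 1, lam' θ 2, μ θ 6, μ θ 7, lam' θ 7, μ θ 8, μ θ 9] : Fin 10 → Fin 6 → ℂ)) :=
  Submodule.subset_span ⟨3, vec10_3 _ _ _ _ _ _ _ _ _ _⟩

lemma nmem4 (θ : ℝ) : lam' θ 2
    ∈ Submodule.span ℤ (Set.range (![μ θ 0, μ θ 1, μ θ 2, lam' θ 1, lam' θ 2, μ θ 6, μ θ 7, lam' θ 7, μ θ 8, μ θ 9] : Fin 10 → Fin 6 → ℂ)) :=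
  Submodule.subset_span ⟨4, vec10_4 _ _ _ _ _ _ _ _ _ _⟩

lemma nmem5 (θ : ℝ) : μ θ 6
    ∈ Submodule.span ℤ (Set.range (![μ θ 0, μ θ 1, μ θ 2, lam' θ 1, lam' θ 2, μ θ 6, μ θ 7, lam' θ 7, μ θ 8, μ θ 9] : Fin 10 → Fin 6 → ℂ)) :=
  Submodule.subset_span ⟨5, vec10_5 _ _ _ _ _ _ _ _ _ _⟩

lemma nmem6 (θ : ℝ) : μ θ 7
    ∈ Submodule.span ℤ (Set.range (![μ θ 0, μ θ 1, μ θ 2, lam' θ 1, lam' θ 2, μ θ 6, μ θ 7, lam' θ 7, μ θ 8, μ θ 9] : Fin 10 → Fin 6 → ℂ)) :=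
  Submodule.subset_span ⟨6, vec10_6 _ _ _ _ _ _ _ _ _ _⟩

lemma nmem7 (θ : ℝ) : lam' θ 7
    ∈ Submodule.span ℤ (Set.range (![μ θ 0, μ θ 1, μ θ 2, lam' θ 1, lam' θ 2, μ θ 6, μ θ 7, lam' θ 7, μ θ 8, μ θ 9] : Fin 10 → Fin 6 → ℂ)) :=
  Submodule.subset_span ⟨7, vec10_7 _ _ _ _ _ _ _ _ _ _⟩

lemma nmem8 (θ : ℝ) : μ θ 8
    ∈ Submodule.span ℤ (Set.range (![μ θ 0, μ θ 1, μ θ 2, lam' θ 1, lam' θ 2, μ θ 6, μ θ 7, lam' θ 7, μ θ 8, μ θ 9] : Fin 10 → Fin 6 → ℂ)) :=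
  Submodule.subset_span ⟨8, vec10_8 _ _ _ _ _ _ _ _ _ _⟩

lemma nmem9 (θ : ℝ) : μ θ 9
    ∈ Submodule.span ℤ (Set.range (![μ θ 0, μ θ 1, μ θ 2, lam' θ 1, lam' θ 2, μ θ 6, μ θ 7, lam' θ 7, μ θ 8, μ θ 9] : Fin 10 → Fin 6 → ℂ)) :=
  Submodule.subset_span ⟨9, vec10_9 _ _ _ _ _ _ _ _ _ _⟩

lemma span4_le' {M : Type*} [AddCommGroup M] [Module ℤ M] (v0 v1 v2 v3 : M)
    (S : Submodule ℤ M) (h0 : v0 ∈ S) (h1 : v1 ∈ S) (h2 : v2 ∈ S) (h3 : v3 ∈ S) :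
    Submodule.span ℤ (Set.range ![v0, v1, v2, v3]) ≤ S := by
  rw [Submodule.span_le]; rintro x ⟨i, rfl⟩; fin_cases i <;> assumption

lemma span6_le' {M : Type*} [AddCommGroup M] [Module ℤ M] (v0 v1 v2 v3 v4 v5 : M)
    (S : Submodule ℤ M) (h0 : v0 ∈ S) (h1 : v1 ∈ S) (h2 : v2 ∈ S) (h3 : v3 ∈ S)
    (h4 : v4 ∈ S) (h5 : v5 ∈ S) :
    Submodule.span ℤ (Set.range ![v0, v1, v2, v3, v4, v5]) ≤ S := by
  rw [Submodule.span_le]; rintro x ⟨i, rfl⟩; fin_cases i <;> assumption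

lemma span10_le' {M : Type*} [AddCommGroup M] [Module ℤ M] (v0 v1 v2 v3 v4 v5 v6 v7 v8 v9 : M)
    (S : Submodule ℤ M) (h0 : v0 ∈ S) (h1 : v1 ∈ S) (h2 : v2 ∈ S) (h3 : v3 ∈ S)
    (h4 : v4 ∈ S) (h5 : v5 ∈ S) (h6 : v6 ∈ S) (h7 : v7 ∈ S) (h8 : v8 ∈ S) (h9 : v9 ∈ S) :
    Submodule.span ℤ (Set.range ![v0, v1, v2, v3, v4, v5, v6, v7, v8, v9]) ≤ S := by
  rw [Submodule.span_le]; rintro x ⟨i, rfl⟩; fin_cases i <;> assumption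

lemma span_le_1 (θ : ℝ) : Submodule.span ℤ (Set.range (![μ θ 0, μ θ 1, μ θ 2, lam' θ 1, lam' θ 2, μ θ 6, μ θ 7, lam' θ 7, μ θ 8, μ θ 9] : Fin 10 → Fin 6 → ℂ))
    ≤ Submodule.span ℤ (Set.range (μ θ)) := by
  have hμmem := hmu_mem θ
  apply span10_le'
  · exact hμmem 0
  · exact hμmem 1
  · exact hμmem 2
  · rw [eq1 θ]; exact add_mem (hμmem 1) (hμmem 4)
  · rw [eq2 θ]; exact add_mem (hμmem 2) (hμmem 5)
  · exact hμmem 6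
  · exact hμmem 7
  · rw [eq8 θ]
    exact add_mem (add_mem (sub_mem (add_mem (add_mem (hμmem 2) (hμmem 3)) (hμmem 4))
      (hμmem 8)) (hμmem 9)) (hμmem 9)
  · exact hμmem 8
  · exact hμmem 9

lemma span_le_2 (θ : ℝ) : Submodule.span ℤ (Set.range (μ θ))
    ≤ Submodule.span ℤ (Set.range (![μ θ 0, μ θ 1, μ θ 2, lam' θ 1, lam' θ 2, μ θ 6, μ θ 7, lam' θ 7, μ θ 8, μ θ 9] : Fin 10 → Fin 6 → ℂ)) := by
  have m4 : μ θ 4 = lam' θ 1 - μ θ 1 := by rw [eq1 θ]; abel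
  have m5 : μ θ 5 = lam' θ 2 - μ θ 2 := by rw [eq2 θ]; abel
  have m3 : μ θ 3 = μ θ 1 - μ θ 2 - lam' θ 1 + lam' θ 7 + μ θ 8 - μ θ 9 - μ θ 9 := by
    rw [eq8 θ, eq1 θ]; abel
  rw [Submodule.span_le, Set.range_subset_iff]
  intro i
  fin_cases i
  · exact nmem0 θ
  · exact nmem1 θ
  · exact nmem2 θ
  · show μ θ 3 ∈ _
    rw [m3]
    exact sub_mem (sub_mem (add_mem (add_mem (sub_mem (sub_mem (nmem1 θ) (nmem2 θ))
      (nmem3 θ)) (nmem7 θ)) (nmem8 θ)) (nmem9 θ)) (nmem9 θ)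
  · show μ θ 4 ∈ _
    rw [m4]; exact sub_mem (nmem3 θ) (nmem1 θ)
  · show μ θ 5 ∈ _
    rw [m5]; exact sub_mem (nmem4 θ) (nmem2 θ)
  · exact nmem5 θ
  · exact nmem6 θ
  · exact nmem8 θ
  · exact nmem9 θ

lemma hP_le (θ : ℝ) : Submodule.span ℤ (Set.range (![μ θ 1, μ θ 2, μ θ 8, μ θ 9] : Fin 4 → Fin 6 → ℂ))
    ≤ Submodule.span ℤ (Set.range (μ θ)) := by
  have hμmem := hmu_mem θ
  exact span4_le' _ _ _ _ _ (hμmem 1) (hμmem 2) (hμmem 8) (hμmem 9)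

lemma hdisj_aux (θ : ℝ) (hθ : Irrational θ) : Disjoint
    (Submodule.span ℤ (Set.range (![lam' θ 0, lam' θ 1, lam' θ 2, lam' θ 3, lam' θ 4, lam' θ 7] : Fin 6 → Fin 6 → ℂ)))
    (Submodule.span ℤ (Set.range (![μ θ 1, μ θ 2, μ θ 8, μ θ 9] : Fin 4 → Fin 6 → ℂ))) := by
  have hst : Disjoint ({0, 3, 4, 5, 6, 7} : Set (Fin 10)) ({1, 2, 8, 9} : Set (Fin 10)) := by
    simp [Set.disjoint_left]
  have h1 : Submodule.span ℤ (Set.range (![lam' θ 0, lam' θ 1, lam' θ 2, lam' θ 3, lam' θ 4, lam' θ 7] : Fin 6 → Fin 6 → ℂ))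
      ≤ Submodule.span ℤ ((![μ θ 0, μ θ 1, μ θ 2, lam' θ 1, lam' θ 2, μ θ 6, μ θ 7, lam' θ 7, μ θ 8, μ θ 9] : Fin 10 → Fin 6 → ℂ) '' {0, 3, 4, 5, 6, 7}) := by
    apply span6_le'
    · exact Submodule.subset_span ⟨0, by simp, (vec10_0 _ _ _ _ _ _ _ _ _ _).trans (lam0_eq θ).symm⟩
    · exact Submodule.subset_span ⟨3, by simp, vec10_3 _ _ _ _ _ _ _ _ _ _⟩
    · exact Submodule.subset_span ⟨4, by simp, vec10_4 _ _ _ _ _ _ _ _ _ _⟩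
    · exact Submodule.subset_span ⟨5, by simp, (vec10_5 _ _ _ _ _ _ _ _ _ _).trans (lam3_eq θ).symm⟩
    · exact Submodule.subset_span ⟨6, by simp, (vec10_6 _ _ _ _ _ _ _ _ _ _).trans (lam4_eq θ).symm⟩
    · exact Submodule.subset_span ⟨7, by simp, vec10_7 _ _ _ _ _ _ _ _ _ _⟩
  have h2 : Submodule.span ℤ (Set.range (![μ θ 1, μ θ 2, μ θ 8, μ θ 9] : Fin 4 → Fin 6 → ℂ))
      ≤ Submodule.span ℤ ((![μ θ 0, μ θ 1, μ θ 2, lam' θ 1, lam' θ 2, μ θ 6, μ θ 7, lam' θ 7, μ θ 8, μ θ 9] : Fin 10 → Fin 6 → ℂ) '' {1, 2, 8, 9}) := by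
    apply span4_le'
    · exact Submodule.subset_span ⟨1, by simp, vec10_1 _ _ _ _ _ _ _ _ _ _⟩
    · exact Submodule.subset_span ⟨2, by simp, vec10_2 _ _ _ _ _ _ _ _ _ _⟩
    · exact Submodule.subset_span ⟨8, by simp, vec10_8 _ _ _ _ _ _ _ _ _ _⟩
    · exact Submodule.subset_span ⟨9, by simp, vec10_9 _ _ _ _ _ _ _ _ _ _⟩
  exact ((ind10 θ hθ).disjoint_span_image hst).mono h1 h2

lemma hsup_le_1 (θ : ℝ) : Submodule.span ℤ (Set.range (![lam' θ 0, lam' θ 1, lam' θ 2, lam' θ 3, lam' θ 4, lam' θ 7] : Fin 6 → Fin 6 → ℂ))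
    ≤ Submodule.span ℤ (Set.range (![μ θ 0, μ θ 1, μ θ 2, lam' θ 1, lam' θ 2, μ θ 6, μ θ 7, lam' θ 7, μ θ 8, μ θ 9] : Fin 10 → Fin 6 → ℂ)) := by
  apply span6_le'
  · rw [lam0_eq θ]; exact nmem0 θ
  · exact nmem3 θ
  · exact nmem4 θ
  · rw [lam3_eq θ]; exact nmem5 θ
  · rw [lam4_eq θ]; exact nmem6 θ
  · exact nmem7 θ

lemma hsup_le_2 (θ : ℝ) : Submodule.span ℤ (Set.range (![μ θ 1, μ θ 2, μ θ 8, μ θ 9] : Fin 4 → Fin 6 → ℂ))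
    ≤ Submodule.span ℤ (Set.range (![μ θ 0, μ θ 1, μ θ 2, lam' θ 1, lam' θ 2, μ θ 6, μ θ 7, lam' θ 7, μ θ 8, μ θ 9] : Fin 10 → Fin 6 → ℂ)) :=
  span4_le' _ _ _ _ _ (nmem1 θ) (nmem2 θ) (nmem8 θ) (nmem9 θ)

lemma hsup_le_3 (θ : ℝ) : Submodule.span ℤ (Set.range (![μ θ 0, μ θ 1, μ θ 2, lam' θ 1, lam' θ 2, μ θ 6, μ θ 7, lam' θ 7, μ θ 8, μ θ 9] : Fin 10 → Fin 6 → ℂ))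
    ≤ Submodule.span ℤ (Set.range (![lam' θ 0, lam' θ 1, lam' θ 2, lam' θ 3, lam' θ 4, lam' θ 7] : Fin 6 → Fin 6 → ℂ))
      ⊔ Submodule.span ℤ (Set.range (![μ θ 1, μ θ 2, μ θ 8, μ θ 9] : Fin 4 → Fin 6 → ℂ)) := by
  apply span10_le'
  · exact Submodule.mem_sup_left
      (Submodule.subset_span ⟨0, (vec6_0 _ _ _ _ _ _).trans (lam0_eq θ)⟩)
  · exact Submodule.mem_sup_right (Submodule.subset_span ⟨0, vec4_0 _ _ _ _⟩)
  · exact Submodule.mem_sup_right (Submodule.subset_span ⟨1, vec4_1 _ _ _ _⟩)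
  · exact Submodule.mem_sup_left (Submodule.subset_span ⟨1, vec6_1 _ _ _ _ _ _⟩)
  · exact Submodule.mem_sup_left (Submodule.subset_span ⟨2, vec6_2 _ _ _ _ _ _⟩)
  · exact Submodule.mem_sup_left
      (Submodule.subset_span ⟨3, (vec6_3 _ _ _ _ _ _).trans (lam3_eq θ)⟩)
  · exact Submodule.mem_sup_left
      (Submodule.subset_span ⟨4, (vec6_4 _ _ _ _ _ _).trans (lam4_eq θ)⟩)
  · exact Submodule.mem_sup_left (Submodule.subset_span ⟨5, vec6_5 _ _ _ _ _ _⟩)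
  · exact Submodule.mem_sup_right (Submodule.subset_span ⟨2, vec4_2 _ _ _ _⟩)
  · exact Submodule.mem_sup_right (Submodule.subset_span ⟨3, vec4_3 _ _ _ _⟩)

end Aux

/-- The six vectors `λ₁′, λ₂′, λ₃′, λ₄′, λ₅′, λ₈′` are ℤ-linearly
independent, the ℤ-submodule they generate is a direct summand of the ℤ-submodule
generated by `{μ₁, …, μ₁₀}`, and the ten vectors
`μ₁ (= λ₁′), μ₂, μ₃, λ₂′, λ₃′, μ₇ (= λ₄′), μ₈ (= λ₅′), λ₈′, μ₉, μ₁₀` are ℤ-linearly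
independent and generate the same ℤ-submodule of ℂ⁶ as `{μ₁, …, μ₁₀}`. -/
theorem lambda_prime_span_direct_summand (θ : ℝ) (hθ : Irrational θ) :
    LinearIndependent ℤ
      ![lam' θ 0, lam' θ 1, lam' θ 2, lam' θ 3, lam' θ 4, lam' θ 7] ∧
    (∃ P : Submodule ℤ (Fin 6 → ℂ),
      P ≤ Submodule.span ℤ (Set.range (μ θ)) ∧
      Submodule.span ℤ
          (Set.range ![lam' θ 0, lam' θ 1, lam' θ 2, lam' θ 3, lam' θ 4, lam' θ 7])
        ⊓ P = ⊥ ∧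
      Submodule.span ℤ
          (Set.range ![lam' θ 0, lam' θ 1, lam' θ 2, lam' θ 3, lam' θ 4, lam' θ 7])
        ⊔ P = Submodule.span ℤ (Set.range (μ θ))) ∧
    LinearIndependent ℤ
      ![μ θ 0, μ θ 1, μ θ 2, lam' θ 1, lam' θ 2, μ θ 6, μ θ 7, lam' θ 7, μ θ 8, μ θ 9] ∧
    Submodule.span ℤ
        (Set.range
          ![μ θ 0, μ θ 1, μ θ 2, lam' θ 1, lam' θ 2, μ θ 6, μ θ 7, lam' θ 7,
            μ θ 8, μ θ 9])
      = Submodule.span ℤ (Set.range (μ θ)) := by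
  have hspan : Submodule.span ℤ (Set.range (![μ θ 0, μ θ 1, μ θ 2, lam' θ 1, lam' θ 2, μ θ 6, μ θ 7, lam' θ 7, μ θ 8, μ θ 9] : Fin 10 → Fin 6 → ℂ))
      = Submodule.span ℤ (Set.range (μ θ)) :=
    le_antisymm (span_le_1 θ) (span_le_2 θ)
  have hsup : Submodule.span ℤ (Set.range (![lam' θ 0, lam' θ 1, lam' θ 2, lam' θ 3, lam' θ 4, lam' θ 7] : Fin 6 → Fin 6 → ℂ))
      ⊔ Submodule.span ℤ (Set.range (![μ θ 1, μ θ 2, μ θ 8, μ θ 9] : Fin 4 → Fin 6 → ℂ))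
      = Submodule.span ℤ (Set.range (![μ θ 0, μ θ 1, μ θ 2, lam' θ 1, lam' θ 2, μ θ 6, μ θ 7, lam' θ 7, μ θ 8, μ θ 9] : Fin 10 → Fin 6 → ℂ)) :=
    le_antisymm (sup_le (hsup_le_1 θ) (hsup_le_2 θ)) (hsup_le_3 θ)
  exact ⟨ind6 θ hθ, ⟨Submodule.span ℤ (Set.range (![μ θ 1, μ θ 2, μ θ 8, μ θ 9] : Fin 4 → Fin 6 → ℂ)), hP_le θ,
    disjoint_iff.mp (hdisj_aux θ hθ), by rw [hsup, hspan]⟩, ind10 θ hθ, hspan⟩
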